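/- Let c ∈ ℂ, r > 0, let E be a compact subset of the open disk {z : |z - c| < r}, and let f : ℂ → ℂ be complex-differentiable on an open set containing the closed disk {z : |z - c| ≤ r}. For each n ∈ ℕ let x_0^{(n)}, …, x_n^{(n)} be distinct points of E, let l_{n+1}(s) = ∏_{i=0}^n (s - x_i^{(n)}), and let P_n be the Lagrange interpolating polynomial of f at these nodes. Suppose ρ > 0 is such that limsup_{n→∞} ((sup_{x ∈ E} |l_{n+1}(x)|)·(sup_{θ∈[0,2π]} 1/|l_{n+1}(c + re^{iθ})|))^{1/(n+1)} ≤ ρ. Then for every x ∈ E, limsup_{n→∞} |f(x) - P_n(x)|^{1/(n+1)} ≤ ρ. -/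

import Mathlib

/-!
Interpolating `s ↦ (z - s)⁻¹` at the nodes leaves the error `l(x) / (l(z) (z - x))`, so Cauchy's
integral formula over the circle `|z - c| = r` gives Hermite's formula
`f x - P x = (2πi)⁻¹ ∮ l(x) f(z) / (l(z) (z - x)) dz`. Bounding the integrand yields
`|f x - P_n x| ≤ C · sup_E |l_{n+1}| · sup_Γ 1/|l_{n+1}|` with `C = r · sup_Γ |f| / (r - |x - c|)`
independent of `n`, and `C ^ (1/(n+1)) → 1` removes it from the limsup.
-/

open Finset Polynomial Metric Filter Real Topology Lagrange

namespace Lagrange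

variable {F ι : Type*} [Field F] [DecidableEq ι] {s : Finset ι} {v : ι → F}

theorem eval_basis (i : ι) (x : F) :
    (Lagrange.basis s v i).eval x = ∏ j ∈ s.erase i, (x - v j) / (v i - v j) := by
  simp [Lagrange.basis, basisDivisor, eval_prod, div_eq_inv_mul]

theorem eval_interpolate (r : ι → F) (x : F) :
    (interpolate s v r).eval x = ∑ i ∈ s, r i * (Lagrange.basis s v i).eval x := by
  simp [interpolate_apply, eval_finsetSum]

theorem inv_sub_sub_eval_interpolate_inv_sub (hvs : Set.InjOn v s) {z x : F}
    (hz : ∀ i ∈ s, z ≠ v i) (hzx : z ≠ x) :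
    (z - x)⁻¹ - (interpolate s v fun i => (z - v i)⁻¹).eval x
      = (nodal s v).eval x / ((nodal s v).eval z * (z - x)) := by
  set N := nodal s v
  -- `Q = (N - N(z)) / (X - z)` has degree `< #s` and the values `N(z) / (z - v i)` at the nodes.
  set Q := N /ₘ (X - C z)
  have hN : ∀ y, N.eval y = N.eval z + (y - z) * Q.eval y := by
    intro y
    conv_lhs => rw [← modByMonic_add_div N (X - C z), modByMonic_X_sub_C_eq_C_eval]
    rw [eval_add, eval_mul, eval_sub, eval_X, eval_C, eval_C]
  have hQ_deg : Q.degree < #s :=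
    (degree_divByMonic_lt N _ nodal_ne_zero (by rw [degree_X_sub_C]; exact zero_lt_one)).trans_eq
      degree_nodal
  have hQ : Q = N.eval z • interpolate s v fun i => (z - v i)⁻¹ := by
    rw [← map_smul, eq_interpolate hvs hQ_deg]
    refine interpolate_eq_of_values_eq_on _ _ fun i hi => ?_
    have hNvi := hN (v i)
    rw [eval_nodal_at_node hi] at hNvi
    rw [Pi.smul_apply, smul_eq_mul, eq_mul_inv_iff_mul_eq₀ (sub_ne_zero.2 (hz i hi))]
    linear_combination hNvi
  have hNz : N.eval z ≠ 0 := eval_nodal_not_at_node hz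
  rw [hN x, hQ, eval_smul, smul_eq_mul]
  field_simp [sub_ne_zero.2 hzx]
  ring

end Lagrange

section

variable {ι : Type*} [DecidableEq ι] {s : Finset ι} {v : ι → ℂ} {f : ℂ → ℂ} {c x : ℂ} {r : ℝ}

theorem DiffContOnCl.circleIntegrable_sub_inv_smul (hf : DiffContOnCl ℂ f (ball c r)) {w : ℂ}
    (hw : w ∈ ball c r) : CircleIntegrable (fun z => (z - w)⁻¹ • f z) c r := by
  have hr : 0 < r := pos_of_mem_ball hw
  have hinv : ContinuousOn (fun z => (z - w)⁻¹) (sphere c r) :=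
    (continuousOn_id.sub continuousOn_const).inv₀ fun z hz =>
      sub_ne_zero.2 (sphere_disjoint_ball.ne_of_mem hz hw)
  refine ContinuousOn.circleIntegrable hr.le (hinv.smul ?_)
  exact hf.continuousOn.mono (sphere_subset_closedBall.trans (closure_ball c hr.ne').symm.subset)

theorem DiffContOnCl.sub_eval_interpolate_eq_circleIntegral (hf : DiffContOnCl ℂ f (ball c r))
    (hv : ∀ i ∈ s, v i ∈ ball c r) (hx : x ∈ ball c r) :
    f x - (interpolate s v (f ∘ v)).eval x = (2 * π * Complex.I : ℂ)⁻¹ •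
      ∮ z in C(c, r),
        ((z - x)⁻¹ - (interpolate s v fun i => (z - v i)⁻¹).eval x) * f z := by
  have hcauchy : ∀ w ∈ ball c r,
      (2 * π * Complex.I : ℂ)⁻¹ • ∮ z in C(c, r), (z - w)⁻¹ • f z = f w :=
    fun w hw => hf.two_pi_i_inv_smul_circleIntegral_sub_inv_smul hw
  have hsplit : ∀ z, ((z - x)⁻¹ - (interpolate s v fun i => (z - v i)⁻¹).eval x) * f z =
      (z - x)⁻¹ • f z - ∑ i ∈ s, (Lagrange.basis s v i).eval x • ((z - v i)⁻¹ • f z) := by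
    intro z
    simp only [eval_interpolate, smul_eq_mul, sub_mul, sum_mul]
    congr 1
    exact sum_congr rfl fun i _ => by ring
  simp_rw [hsplit]
  rw [circleIntegral.integral_sub (hf.circleIntegrable_sub_inv_smul hx)
      (CircleIntegrable.fun_sum _ fun i hi =>
        (hf.circleIntegrable_sub_inv_smul (hv i hi)).const_fun_smul),
    circleIntegral.integral_fun_sum fun i hi =>
      (hf.circleIntegrable_sub_inv_smul (hv i hi)).const_fun_smul]
  simp_rw [circleIntegral.integral_smul, smul_sub, Finset.smul_sum,
    smul_comm _ ((Lagrange.basis s v _).eval x)]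
  rw [hcauchy x hx, eval_interpolate]
  congr 1
  refine sum_congr rfl fun i hi => ?_
  rw [hcauchy _ (hv i hi), smul_eq_mul, mul_comm, Function.comp_apply]

theorem DiffContOnCl.sub_eval_interpolate_eq_circleIntegral_nodal
    (hf : DiffContOnCl ℂ f (ball c r)) (hvs : Set.InjOn v s) (hv : ∀ i ∈ s, v i ∈ ball c r)
    (hx : x ∈ ball c r) :
    f x - (interpolate s v (f ∘ v)).eval x = (2 * π * Complex.I : ℂ)⁻¹ •
      ∮ z in C(c, r), (nodal s v).eval x / ((nodal s v).eval z * (z - x)) * f z := by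
  rw [hf.sub_eval_interpolate_eq_circleIntegral hv hx]
  refine congrArg _ (circleIntegral.integral_congr (pos_of_mem_ball hx).le fun z hz => ?_)
  rw [inv_sub_sub_eval_interpolate_inv_sub hvs
    (fun i hi => sphere_disjoint_ball.ne_of_mem hz (hv i hi))
    (sphere_disjoint_ball.ne_of_mem hz hx)]

theorem DiffContOnCl.norm_sub_eval_interpolate_le
    (hf : DiffContOnCl ℂ f (ball c r)) (hvs : Set.InjOn v s) (hv : ∀ i ∈ s, v i ∈ ball c r)
    (hx : x ∈ ball c r) {M A B : ℝ} (hM : ∀ z ∈ sphere c r, ‖f z‖ ≤ M)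
    (hA : ‖(nodal s v).eval x‖ ≤ A)
    (hB : ∀ z ∈ sphere c r, ‖(nodal s v).eval z‖⁻¹ ≤ B) :
    ‖f x - (interpolate s v (f ∘ v)).eval x‖ ≤ r * M / (r - dist x c) * (A * B) := by
  have hr : 0 < r := pos_of_mem_ball hx
  have hc : c + r ∈ sphere c r := by simp [abs_of_pos hr]
  have hd : 0 < r - dist x c := sub_pos.2 (mem_ball.1 hx)
  have hA0 : 0 ≤ A := (norm_nonneg _).trans hA
  have hB0 : 0 ≤ B := (inv_nonneg.2 (norm_nonneg _)).trans (hB _ hc)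
  have hbound : ∀ z ∈ sphere c r,
      ‖(nodal s v).eval x / ((nodal s v).eval z * (z - x)) * f z‖ ≤
        A * B * (r - dist x c)⁻¹ * M := by
    intro z hz
    have hzx : r - dist x c ≤ ‖z - x‖ := by
      rw [← dist_eq_norm, ← mem_sphere.1 hz]
      linarith [dist_triangle z x c]
    rw [norm_mul, norm_div, norm_mul, div_eq_mul_inv, mul_inv, ← mul_assoc]
    gcongr
    exacts [hB z hz, hM z hz]
  rw [hf.sub_eval_interpolate_eq_circleIntegral_nodal hvs hv hx]
  refine (circleIntegral.norm_two_pi_i_inv_smul_integral_le_of_norm_le_const hr.le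
    hbound).trans_eq ?_
  field_simp

end

theorem le_biSup_of_bddAbove_image {α β : Type*} [ConditionallyCompleteLattice α] {g : β → α}
    {E : Set β} (hg : BddAbove (g '' E)) {b : β} (hb : b ∈ E) : g b ≤ ⨆ y ∈ E, g y :=
  le_ciSup₂ (f := fun y (_ : y ∈ E) => g y)
    (hg.mono (Set.iUnion_subset fun _ => Set.range_subset_iff.2 (Set.mem_image_of_mem g))) b hb

theorem Continuous.le_biSup_of_isBounded {α : Type*} [PseudoMetricSpace α] [ProperSpace α]
    {g : α → ℝ} (hg : Continuous g) {E : Set α} (hE : Bornology.IsBounded E) {b : α}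
    (hb : b ∈ E) : g b ≤ ⨆ y ∈ E, g y :=
  le_biSup_of_bddAbove_image
    ((hE.isCompact_closure.image hg).bddAbove.mono (Set.image_mono subset_closure)) hb

theorem le_iSup_Icc_circleMap {g : ℂ → ℝ} {c z : ℂ} {r : ℝ}
    (hg : ContinuousOn g (sphere c r)) (hz : z ∈ sphere c r) :
    g z ≤ ⨆ θ : Set.Icc 0 (2 * π), g (circleMap c r θ) := by
  have hr : 0 ≤ r := dist_nonneg.trans_eq (mem_sphere.1 hz)
  rw [← abs_of_nonneg hr, ← image_circleMap_Ioc] at hz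
  obtain ⟨θ, hθ, rfl⟩ := hz
  have hcont : Continuous fun θ : Set.Icc 0 (2 * π) => g (circleMap c r θ) :=
    hg.comp_continuous ((continuous_circleMap c r).comp continuous_subtype_val)
      fun θ => circleMap_mem_sphere c hr θ
  exact le_ciSup (isCompact_range hcont).bddAbove ⟨θ, Set.Ioc_subset_Icc_self hθ⟩

theorem Lagrange.inv_norm_eval_nodal_le_iSup_circleMap {ι : Type*} {s : Finset ι} {v : ι → ℂ}
    {c z : ℂ} {r : ℝ} (hv : ∀ i ∈ s, v i ∈ ball c r) (hz : z ∈ sphere c r) :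
    ‖(nodal s v).eval z‖⁻¹ ≤
      ⨆ θ : Set.Icc 0 (2 * π), 1 / ‖(nodal s v).eval (circleMap c r θ)‖ := by
  rw [← one_div]
  refine le_iSup_Icc_circleMap (g := fun z => 1 / ‖(nodal s v).eval z‖) ?_ hz
  exact continuousOn_const.div (Polynomial.continuous _).norm.continuousOn fun w hw =>
    norm_ne_zero_iff.2 (eval_nodal_not_at_node fun i hi =>
      sphere_disjoint_ball.ne_of_mem hw (hv i hi))

theorem limsup_ofReal_rpow_le_of_le_const_mul {α : Type*} {l : Filter α} [l.NeBot]
    {a b e : α → ℝ} {C : ℝ} (hC : 0 < C) (ha : ∀ n, 0 ≤ a n) (hab : ∀ n, a n ≤ C * b n)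
    (he : Tendsto e l (𝓝 0)) (he0 : ∀ n, 0 ≤ e n) :
    limsup (fun n => ENNReal.ofReal (a n ^ e n)) l ≤
      limsup (fun n => ENNReal.ofReal (b n ^ e n)) l := by
  have hb : ∀ n, 0 ≤ b n := fun n => nonneg_of_mul_nonneg_right ((ha n).trans (hab n)) hC
  have hCe : Tendsto (fun n => ENNReal.ofReal (C ^ e n)) l (𝓝 1) := by
    have := (ENNReal.continuous_ofReal.tendsto _).comp
      ((continuousAt_const_rpow hC.ne').tendsto.comp he)
    rwa [rpow_zero, ENNReal.ofReal_one] at this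
  have hstep : ∀ n, ENNReal.ofReal (a n ^ e n) ≤
      ENNReal.ofReal (C ^ e n) * ENNReal.ofReal (b n ^ e n) := fun n => by
    rw [← ENNReal.ofReal_mul (by positivity), ← mul_rpow hC.le (hb n)]
    exact ENNReal.ofReal_le_ofReal (rpow_le_rpow (ha n) (hab n) (he0 n))
  calc limsup (fun n => ENNReal.ofReal (a n ^ e n)) l
      ≤ limsup ((fun n => ENNReal.ofReal (C ^ e n)) * fun n => ENNReal.ofReal (b n ^ e n)) l :=
        limsup_le_limsup (Eventually.of_forall hstep)
    _ ≤ limsup (fun n => ENNReal.ofReal (C ^ e n)) l *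
          limsup (fun n => ENNReal.ofReal (b n ^ e n)) l :=
        ENNReal.limsup_mul_le' (.inl (by simp [hCe.limsup_eq])) (.inl (by simp [hCe.limsup_eq]))
    _ = limsup (fun n => ENNReal.ofReal (b n ^ e n)) l := by rw [hCe.limsup_eq, one_mul]

theorem polynomial_interpolation_exponential_convergence_general (c : ℂ) (r : ℝ) (hr : 0 < r)
    (E : Set ℂ) (hE_sub : E ⊆ Metric.ball c r)
    (f : ℂ → ℂ) (U : Set ℂ) (hUsub : Metric.closedBall c r ⊆ U)
    (hf : DifferentiableOn ℂ f U)
    (x : ∀ n : ℕ, Fin (n + 1) → ℂ)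
    (hx_inj : ∀ n, Function.Injective (x n))
    (hx_mem : ∀ n i, x n i ∈ E)
    (l : ℕ → ℂ → ℂ) (hl : ∀ n s, l n s = ∏ i, (s - x n i))
    (P : ℕ → ℂ → ℂ)
    (hP : ∀ n X, P n X = ∑ i, f (x n i) *
      ∏ j ∈ univ.erase i, (X - x n j) / (x n i - x n j))
    (ρ : ℝ)
    (hfac : Filter.limsup (fun n : ℕ => ENNReal.ofReal
        (((⨆ X ∈ E, ‖l n X‖) *
          (⨆ θ : Set.Icc (0:ℝ) (2 * Real.pi),
            1 / ‖l n (c + (r : ℂ) * Complex.exp (((θ : ℝ) : ℂ) * Complex.I))‖))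
          ^ ((1 : ℝ) / (n + 1))))
        Filter.atTop ≤ ENNReal.ofReal ρ) :
    ∀ X ∈ E, Filter.limsup (fun n : ℕ =>
        ENNReal.ofReal (‖f X - P n X‖ ^ ((1 : ℝ) / (n + 1))))
      Filter.atTop ≤ ENNReal.ofReal ρ := by
  intro X hX
  obtain rfl : l = fun n s => (nodal univ (x n)).eval s := by
    ext n s; rw [hl, eval_nodal]
  obtain rfl : P = fun n X => (interpolate univ (x n) (f ∘ x n)).eval X := by
    ext n X; simp only [hP, eval_interpolate, eval_basis, Function.comp_apply]
  obtain ⟨M, hM0, hM⟩ := ((isCompact_sphere c r).image_of_continuousOn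
    (hf.continuousOn.mono (sphere_subset_closedBall.trans hUsub))).isBounded.exists_pos_norm_le
  have hXc : 0 < r - dist X c := sub_pos.2 (hE_sub hX)
  refine (limsup_ofReal_rpow_le_of_le_const_mul (C := r * M / (r - dist X c))
    (div_pos (mul_pos hr hM0) hXc) (fun n => norm_nonneg _) (fun n => ?_)
    tendsto_one_div_add_atTop_nhds_zero_nat (fun n => by positivity)).trans hfac
  have hnodes : ∀ i ∈ univ, x n i ∈ ball c r := fun i _ => hE_sub (hx_mem n i)
  exact (hf.diffContOnCl_ball hUsub).norm_sub_eval_interpolate_le (hx_inj n).injOn hnodes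
    (hE_sub hX) (fun z hz => hM _ (Set.mem_image_of_mem f hz))
    ((Polynomial.continuous _).norm.le_biSup_of_isBounded (isBounded_ball.subset hE_sub) hX)
    (fun z hz => inv_norm_eval_nodal_le_iSup_circleMap hnodes hz)

/-- Asymptotic exponential convergence estimate (1d) for polynomial interpolation in
conditional form: if the geometric factor
`(sup_E |l_{n+1}| · sup_Γ 1/|l_{n+1}|)^{1/(n+1)}` has limsup at most `ρ`, then the
interpolation error satisfies `limsup |f(x) - P_n(x)|^{1/(n+1)} ≤ ρ` on `E`. -/
theorem polynomial_interpolation_exponential_convergence (c : ℂ) (r : ℝ) (hr : 0 < r)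
    (E : Set ℂ) (hE_compact : IsCompact E) (hE_sub : E ⊆ Metric.ball c r)
    (f : ℂ → ℂ) (U : Set ℂ) (hUopen : IsOpen U) (hUsub : Metric.closedBall c r ⊆ U)
    (hf : DifferentiableOn ℂ f U)
    (x : ∀ n : ℕ, Fin (n + 1) → ℂ)
    (hx_inj : ∀ n, Function.Injective (x n))
    (hx_mem : ∀ n i, x n i ∈ E)
    (l : ℕ → ℂ → ℂ) (hl : ∀ n s, l n s = ∏ i, (s - x n i))
    (P : ℕ → ℂ → ℂ)
    (hP : ∀ n X, P n X = ∑ i, f (x n i) *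
      ∏ j ∈ univ.erase i, (X - x n j) / (x n i - x n j))
    (ρ : ℝ) (hρ : 0 < ρ)
    (hfac : Filter.limsup (fun n : ℕ => ENNReal.ofReal
        (((⨆ X ∈ E, ‖l n X‖) *
          (⨆ θ : Set.Icc (0:ℝ) (2 * Real.pi),
            1 / ‖l n (c + (r : ℂ) * Complex.exp (((θ : ℝ) : ℂ) * Complex.I))‖))
          ^ ((1 : ℝ) / (n + 1))))
        Filter.atTop ≤ ENNReal.ofReal ρ) :
    ∀ X ∈ E, Filter.limsup (fun n : ℕ =>
        ENNReal.ofReal (‖f X - P n X‖ ^ ((1 : ℝ) / (n + 1))))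
      Filter.atTop ≤ ENNReal.ofReal ρ :=
  polynomial_interpolation_exponential_convergence_general c r hr E hE_sub f U hUsub hf x hx_inj
    hx_mem l hl P hP ρ hfac
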